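/- With the above notation, $A^{(m)} = \sum_{p=0}^{\lfloor m/2 \rfloor} (-1)^p\, T_p^{(m)}$ holds in $L$, where for $0 \le p \le \lfloor m/2 \rfloor$ one sets $\mathcal{T}_p^{(m)} = \{\sigma \subset \mathbb{Z}/m\mathbb{Z} : |\sigma| = p \text{ and } j \neq j'+1 \text{ for all } j, j' \in \sigma\}$, $\overline{\sigma} = \{j \in \mathbb{Z}/m\mathbb{Z} : j \notin \sigma \text{ and } j-1 \notin \sigma\}$, and $T_p^{(m)} = \sum_{\sigma \in \mathcal{T}_p^{(m)}} \prod_{j \in \sigma} F_j \prod_{j' \in \overline{\sigma}} z_{j'}$. -/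

import Mathlib

/-!
Read `z_j` as a weight on the vertex `j` and `-F_j` as a weight on the edge `{j, j + 1}` of the
cycle `ℤ/mℤ`. Then `∑_p (-1)^p T_p^{(m)}` is the sum, over all matchings `σ` of the cycle, of
`(-1)^|σ| ∏_{j ∈ σ} F_j ∏_{j unmatched} z_j`, and `C^{(k)}`, `C_+^{(k)}` are the same matching sums
for the paths `2 — ⋯ — k` and `3 — ⋯ — k + 1`: their three-term recurrence is the split according
to whether the last vertex is unmatched or matched to its predecessor. Sorting the matchings of
the cycle by the fate of the vertex `1` (unmatched, matched to `m`, matched to `2`) leaves the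
paths `2 — ⋯ — m`, `2 — ⋯ — m - 1` and `3 — ⋯ — m`, whence
`z_1 C^{(m)} - F_m C^{(m-1)} - F_1 C_+^{(m-1)}`.
-/

/- Setting: `Lm K m` is the field of fractions of the (Laurent) polynomial ring over a field
`K` in commuting variables `yv n` indexed by `n : ZMod m`, with fixed scalars `F n : K`. -/

noncomputable section

variable (K : Type) [Field K] (m : ℕ) [NeZero m]

/-- The ambient field `L`. -/
abbrev Lm := FractionRing (MvPolynomial (ZMod m) K)

/-- The variable `y_n`. -/
def yv (n : ZMod m) : Lm K m :=
  algebraMap (MvPolynomial (ZMod m) K) (Lm K m) (MvPolynomial.X n)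

variable (F : ZMod m → K)

/-- The scalar `F_n` viewed inside `L`. -/
def Fc (n : ZMod m) : Lm K m := algebraMap K (Lm K m) (F n)

/-- `X_n = F_n / (y_n y_{n+1})`. -/
def Xv (n : ZMod m) : Lm K m := Fc K m F n / (yv K m n * yv K m (n + 1))

/-- `P_n = 1 + ∑_{k=0}^{m-2} X_n X_{n-1} ⋯ X_{n-k}`. -/
def Pv (n : ZMod m) : Lm K m :=
  1 + ∑ k ∈ Finset.range (m - 1), ∏ j ∈ Finset.range (k + 1), Xv K m F (n - (j : ZMod m))

/-- `z_n = y_n (1 + X_n)`. -/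
def zv (n : ZMod m) : Lm K m := yv K m n * (1 + Xv K m F n)

/-- `𝐲 = ∏_n y_n`. -/
def boldy : Lm K m := ∏ n : ZMod m, yv K m n

/-- `𝐅 = ∏_n F_n` (viewed in `L`). -/
def boldF : Lm K m := ∏ n : ZMod m, Fc K m F n

/-- `δ = 𝐲 - 𝐅/𝐲`. -/
def deltav : Lm K m := boldy K m - boldF K m F / boldy K m
/-- `C^{(1)} = 1`, `C^{(2)} = z_2`, `C^{(k)} = z_k C^{(k-1)} - F_{k-1} C^{(k-2)}` (indices mod `m`). -/
def Cv : ℕ → Lm K m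
  | 0 => 1
  | 1 => 1
  | 2 => zv K m F ((2 : ℕ) : ZMod m)
  | (k + 3) => zv K m F ((k + 3 : ℕ) : ZMod m) * Cv (k + 2)
      - Fc K m F ((k + 2 : ℕ) : ZMod m) * Cv (k + 1)

/-- The shifted sequence `C_+^{(1)} = 1`, `C_+^{(2)} = z_3`,
`C_+^{(k)} = z_{k+1} C_+^{(k-1)} - F_k C_+^{(k-2)}` (indices mod `m`). -/
def Cpv : ℕ → Lm K m
  | 0 => 1
  | 1 => 1
  | 2 => zv K m F ((3 : ℕ) : ZMod m)
  | (k + 3) => zv K m F ((k + 4 : ℕ) : ZMod m) * Cpv (k + 2)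
      - Fc K m F ((k + 3 : ℕ) : ZMod m) * Cpv (k + 1)

/-- `A^{(m)} = z_1 C^{(m)} - F_m C^{(m-1)} - F_1 C_+^{(m-1)}`. -/
def Av : Lm K m :=
  zv K m F ((1 : ℕ) : ZMod m) * Cv K m F m - Fc K m F ((m : ℕ) : ZMod m) * Cv K m F (m - 1)
    - Fc K m F ((1 : ℕ) : ZMod m) * Cpv K m F (m - 1)

/-- The collection `𝒯_p^{(m)}` of subsets `σ ⊆ ℤ/mℤ` with `|σ| = p` containing no two
"consecutive" elements (`j ≠ j' + 1` for all `j, j' ∈ σ`). -/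
def Tsets (p : ℕ) : Finset (Finset (ZMod m)) :=
  Finset.univ.powerset.filter fun σ => σ.card = p ∧ ∀ j ∈ σ, ∀ j' ∈ σ, j ≠ j' + 1

/-- `T_p^{(m)} = ∑_{σ ∈ 𝒯_p^{(m)}} ∏_{j ∈ σ} F_j ∏_{j' ∈ σ̄} z_{j'}` where
`σ̄ = {j : j ∉ σ, j - 1 ∉ σ}`. -/
def Tv (p : ℕ) : Lm K m :=
  ∑ σ ∈ Tsets m p,
    (∏ j ∈ σ, Fc K m F j) *
      ∏ j' ∈ Finset.univ.filter (fun j => j ∉ σ ∧ j - 1 ∉ σ), zv K m F j'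

open Finset

lemma Finset.sum_powerset_image_of_bijOn {ι κ M : Type*} [AddCommMonoid M] [DecidableEq κ]
    {s : Finset ι} {t : Finset κ} {e : ι → κ} (he : Set.BijOn e s t) (f : Finset κ → M) :
    ∑ τ ∈ s.powerset, f (τ.image e) = ∑ σ ∈ t.powerset, f σ := by
  refine sum_nbij' (·.image e) (fun σ => s.filter (e · ∈ σ)) ?_ ?_ ?_ ?_ (fun _ _ => rfl)
  · intro τ hτ
    rw [mem_powerset] at hτ ⊢
    exact image_subset_iff.mpr fun x hx => he.mapsTo (hτ hx)
  · intro σ _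
    exact mem_powerset.mpr (filter_subset _ _)
  · intro τ hτ
    rw [mem_powerset] at hτ
    ext x
    simp only [mem_filter, mem_image]
    constructor
    · rintro ⟨hx, y, hy, hxy⟩
      rwa [he.injOn hx (hτ hy) hxy.symm]
    · exact fun hx => ⟨hτ hx, x, hx, rfl⟩
  · intro σ hσ
    rw [mem_powerset] at hσ
    ext y
    simp only [mem_image, mem_filter]
    constructor
    · rintro ⟨x, ⟨-, hx⟩, rfl⟩
      exact hx
    · intro hy
      obtain ⟨x, hx, rfl⟩ := he.surjOn (hσ hy)
      exact ⟨x, ⟨hx, hy⟩, rfl⟩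

lemma Finset.sum_powerset_ite_mem {α M : Type*} [AddCommMonoid M] [DecidableEq α]
    (s : Finset α) (x : α) (f : Finset α → M) :
    ∑ t ∈ s.powerset, (if x ∈ t then 0 else f t) = ∑ t ∈ (s.erase x).powerset, f t := by
  by_cases hx : x ∈ s
  · rw [← insert_erase hx, sum_powerset_insert (notMem_erase x s), erase_insert (notMem_erase x s)]
    rw [sum_eq_zero (fun t _ => if_pos (mem_insert_self x t)), add_zero]
    refine sum_congr rfl fun t ht => if_neg fun h => ?_
    exact notMem_erase x s (mem_powerset.mp ht h)
  · rw [erase_eq_of_notMem hx]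
    exact sum_congr rfl fun t ht => if_neg fun h => hx (mem_powerset.mp ht h)

section Matchings

variable {α R : Type*} [CommRing R]

-- `σ` is a set of edges of a path or cycle on `α`, the edge `j` joining `j` and `j + 1`.
def IsMatching [Add α] [One α] (σ : Finset α) : Prop := ∀ j ∈ σ, j + 1 ∉ σ

@[simp] lemma isMatching_empty [Add α] [One α] : IsMatching (∅ : Finset α) := by
  simp [IsMatching]

lemma isMatching_iff_forall_ne [Add α] [One α] {σ : Finset α} :
    IsMatching σ ↔ ∀ j ∈ σ, ∀ j' ∈ σ, j ≠ j' + 1 := by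
  simp only [IsMatching, ne_eq]
  exact ⟨fun h j hj j' hj' hjj' => h j' hj' (hjj' ▸ hj), fun h j hj hj1 => h _ hj1 j hj rfl⟩

variable [DecidableEq α]

instance [Add α] [One α] : DecidablePred (IsMatching (α := α)) :=
  fun σ => inferInstanceAs (Decidable (∀ j ∈ σ, j + 1 ∉ σ))

lemma IsMatching.two_mul_card_le [Fintype α] [Add α] [IsRightCancelAdd α] [One α]
    {σ : Finset α} (hσ : IsMatching σ) : 2 * #σ ≤ Fintype.card α := by
  have hdisj : Disjoint σ (σ.image (· + 1)) := by
    rw [disjoint_right]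
    intro _ hj1 hj
    obtain ⟨j, hj', rfl⟩ := mem_image.mp hj1
    exact hσ j hj' hj
  calc 2 * #σ = #(σ ∪ σ.image (· + 1)) := by
        rw [card_union_of_disjoint hdisj, card_image_of_injective _ (add_left_injective 1)]; ring
    _ ≤ Fintype.card α := card_le_univ _

-- On `ℕ` the junk value `0 - 1 = 0` is harmless: the test `j ∈ σ` comes first.
def vertexWeight [Sub α] [One α] (z F : α → R) (σ : Finset α) (j : α) : R :=
  if j ∈ σ then -F j else if j - 1 ∈ σ then 1 else z j

def matchingWeight [Add α] [Sub α] [One α] (z F : α → R) (V σ : Finset α) : R :=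
  if IsMatching σ then ∏ j ∈ V, vertexWeight z F σ j else 0

lemma vertexWeight_of_notMem [Sub α] [One α] {z F : α → R} {σ : Finset α} {j : α}
    (hj : j ∉ σ) (hj' : j - 1 ∉ σ) : vertexWeight z F σ j = z j := by
  simp [vertexWeight, hj, hj']

lemma vertexWeight_insert_of_ne [Sub α] [One α] (z F : α → R) (σ : Finset α) {x j : α}
    (hj : j ≠ x) (hj' : j - 1 ≠ x) :
    vertexWeight z F (insert x σ) j = vertexWeight z F σ j := by
  simp [vertexWeight, hj, hj']

lemma prod_vertexWeight [Fintype α] [Sub α] [One α] (z F : α → R) (σ : Finset α) :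
    ∏ j, vertexWeight z F σ j
      = (-1) ^ #σ * ((∏ j ∈ σ, F j) * ∏ j with j ∉ σ ∧ j - 1 ∉ σ, z j) := by
  rw [← mul_assoc, ← prod_neg]
  unfold vertexWeight
  rw [prod_ite, prod_ite, prod_const_one, one_mul, filter_filter, filter_mem_eq_inter,
    univ_inter]

end Matchings

section Path

variable {R : Type*} [CommRing R] (z F : ℕ → R)

def pathMatchingSum (a b : ℕ) : R :=
  ∑ σ ∈ (Ico a b).powerset, matchingWeight z F (Icc a b) σ

lemma pathMatchingSum_of_lt {a b : ℕ} (h : b < a) : pathMatchingSum z F a b = 1 := by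
  rw [pathMatchingSum, Ico_eq_empty_of_le h.le, Icc_eq_empty_of_lt h, powerset_empty,
    sum_singleton, matchingWeight, if_pos isMatching_empty, prod_empty]

lemma pathMatchingSum_self (a : ℕ) : pathMatchingSum z F a a = z a := by
  rw [pathMatchingSum, Ico_self, Icc_self, powerset_empty, sum_singleton, matchingWeight,
    if_pos isMatching_empty, prod_singleton, vertexWeight_of_notMem (notMem_empty _)
    (notMem_empty _)]

variable {z F}

lemma isMatching_insert_succ_iff {σ : Finset ℕ} {b : ℕ} (hσ : ∀ j ∈ σ, j ≤ b) :
    IsMatching (insert (b + 1) σ) ↔ IsMatching σ ∧ b ∉ σ := by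
  have hb : b + 1 + 1 ∉ σ := fun h => by have := hσ _ h; omega
  simp only [IsMatching, mem_insert, forall_eq_or_imp]
  constructor
  · rintro ⟨-, h⟩
    exact ⟨fun j hj hj1 => (h j hj) (Or.inr hj1), fun hbσ => (h b hbσ) (Or.inl rfl)⟩
  · rintro ⟨h, hbσ⟩
    refine ⟨fun h' => h'.elim (by omega) hb, fun j hj => ?_⟩
    rintro (hj1 | hj1)
    · exact hbσ (by rwa [show j = b by omega] at hj)
    · exact h j hj hj1

lemma isMatching_insert_iff_of_lt {σ : Finset ℕ} {a : ℕ} (hσ : ∀ j ∈ σ, a < j) :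
    IsMatching (insert a σ) ↔ IsMatching σ ∧ a + 1 ∉ σ := by
  simp only [IsMatching, mem_insert, forall_eq_or_imp]
  constructor
  · rintro ⟨h, h'⟩
    exact ⟨fun j hj hj1 => (h' j hj) (Or.inr hj1), fun ha => h (Or.inr ha)⟩
  · rintro ⟨h, ha⟩
    refine ⟨fun h' => h'.elim (by omega) ha, fun j hj => ?_⟩
    rintro (hj1 | hj1)
    · have := hσ j hj; omega
    · exact h j hj hj1

lemma matchingWeight_Icc_succ {σ : Finset ℕ} {a b : ℕ} (h : a ≤ b + 1) :
    matchingWeight z F (Icc a (b + 1)) σ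
      = vertexWeight z F σ (b + 1) * matchingWeight z F (Icc a b) σ := by
  rw [matchingWeight, matchingWeight, ← insert_Icc_right_eq_Icc_add_one h,
    prod_insert (by simp), mul_ite, mul_zero]

lemma matchingWeight_insert_succ {σ : Finset ℕ} {a b : ℕ} (h : a ≤ b + 1)
    (hσ : σ ⊆ Ico a (b + 1)) :
    matchingWeight z F (Icc a (b + 1)) (insert (b + 1) σ)
      = if b ∈ σ then 0 else -F (b + 1) * matchingWeight z F (Icc a b) σ := by
  have hσb : ∀ j ∈ σ, j ≤ b := fun j hj => by have := mem_Ico.mp (hσ hj); omega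
  have hprod : ∏ j ∈ Icc a (b + 1), vertexWeight z F (insert (b + 1) σ) j
      = -F (b + 1) * ∏ j ∈ Icc a b, vertexWeight z F σ j := by
    rw [← insert_Icc_right_eq_Icc_add_one h, prod_insert (by simp), vertexWeight,
      if_pos (mem_insert_self _ _)]
    refine congrArg _ (prod_congr rfl fun j hj => ?_)
    have := mem_Icc.mp hj
    refine vertexWeight_insert_of_ne z F σ ?_ ?_ <;> omega
  unfold matchingWeight
  rw [hprod]
  by_cases hb : b ∈ σ <;> by_cases hM : IsMatching σ <;>
    simp [isMatching_insert_succ_iff hσb, hb, hM]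

lemma matchingWeight_insert_of_lt {σ : Finset ℕ} {a b : ℕ} (h : a + 1 ≤ b)
    (hσ : σ ⊆ Ico (a + 1) b) :
    matchingWeight z F (Icc (a + 1) b) (insert a σ)
      = if a + 1 ∈ σ then 0 else matchingWeight z F (Icc (a + 2) b) σ := by
  have hσa : ∀ j ∈ σ, a < j := fun j hj => by have := mem_Ico.mp (hσ hj); omega
  have hprod (ha : a + 1 ∉ σ) : ∏ j ∈ Icc (a + 1) b, vertexWeight z F (insert a σ) j
      = ∏ j ∈ Icc (a + 2) b, vertexWeight z F σ j := by
    rw [← insert_Icc_add_one_left_eq_Icc h, prod_insert (by simp), vertexWeight,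
      if_neg (by simp [ha]), if_pos (by simp), one_mul]
    refine prod_congr rfl fun j hj => ?_
    have := mem_Icc.mp hj
    refine vertexWeight_insert_of_ne z F σ ?_ ?_ <;> omega
  unfold matchingWeight
  by_cases ha : a + 1 ∈ σ
  · simp [isMatching_insert_iff_of_lt hσa, ha]
  · rw [hprod ha]
    simp [isMatching_insert_iff_of_lt hσa, ha]

theorem pathMatchingSum_add_two {a b : ℕ} (h : a ≤ b + 1) :
    pathMatchingSum z F a (b + 2)
      = z (b + 2) * pathMatchingSum z F a (b + 1) - F (b + 1) * pathMatchingSum z F a b := by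
  have hIco : Ico a (b + 2) = insert (b + 1) (Ico a (b + 1)) :=
    (insert_Ico_right_eq_Ico_add_one_of_not_isMax h (not_isMax _)).symm
  have hIco_erase : (Ico a (b + 1)).erase b = Ico a b := by ext; simp; omega
  rw [pathMatchingSum, hIco, sum_powerset_insert (by simp), sub_eq_add_neg, pathMatchingSum,
    pathMatchingSum, mul_sum, neg_mul_eq_neg_mul, mul_sum, ← hIco_erase, ← sum_powerset_ite_mem]
  congr 1 <;> refine sum_congr rfl fun σ hσ => ?_ <;> rw [mem_powerset] at hσ
  · rw [matchingWeight_Icc_succ (by omega),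
      vertexWeight_of_notMem (fun hb2 => by simpa using hσ hb2) (fun hb => by simpa using hσ hb)]
  · have hb2 : b + 2 ∉ σ := fun hb2 => by simpa using hσ hb2
    rw [matchingWeight_Icc_succ (by omega), vertexWeight, if_neg (by simpa using hb2),
      if_pos (by simp), one_mul, matchingWeight_insert_succ h hσ]

end Path

section Cycle

variable {n : ℕ}

lemma Ico_two_subset_Icc_one : Ico 2 n ⊆ Icc 1 n :=
  fun j hj => by simp only [mem_Ico, mem_Icc] at hj ⊢; omega

variable [NeZero n]

lemma bijOn_natCast_Icc :
    Set.BijOn (Nat.cast : ℕ → ZMod n) (Icc 1 n) (univ : Finset (ZMod n)) := by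
  have hn : 0 < n := Nat.pos_of_neZero n
  rw [coe_univ]
  refine ⟨fun _ _ => Set.mem_univ _, fun i hi j hj hij => ?_, fun x _ => ?_⟩
  · simp only [coe_Icc, Set.mem_Icc] at hi hj
    have hpred : ((i - 1 : ℕ) : ZMod n) = ((j - 1 : ℕ) : ZMod n) := by
      rw [Nat.cast_sub hi.1, Nat.cast_sub hj.1, hij]
    have := congrArg ZMod.val hpred
    rw [ZMod.val_cast_of_lt (by omega), ZMod.val_cast_of_lt (by omega)] at this
    omega
  · by_cases hx : x = 0
    · exact ⟨n, by simp; omega, by rw [hx, ZMod.natCast_self]⟩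
    · refine ⟨x.val, ?_, ZMod.natCast_zmod_val x⟩
      have := (ZMod.val_eq_zero x).not.mpr hx
      have := ZMod.val_lt x
      simp only [coe_Icc, Set.mem_Icc]
      omega

lemma natCast_mem_image_natCast_iff {τ : Finset ℕ} (hτ : τ ⊆ Icc 1 n) {j : ℕ}
    (hj : j ∈ Icc 1 n) : (j : ZMod n) ∈ τ.image Nat.cast ↔ j ∈ τ := by
  rw [← mem_coe, coe_image, bijOn_natCast_Icc.injOn.mem_image_iff (coe_subset.mpr hτ) hj,
    mem_coe]

lemma isMatching_image_natCast_iff {τ : Finset ℕ} (hτ : τ ⊆ Icc 1 n) :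
    IsMatching (τ.image (Nat.cast : ℕ → ZMod n)) ↔ IsMatching τ ∧ ¬(n ∈ τ ∧ 1 ∈ τ) := by
  have hn : 0 < n := Nat.pos_of_neZero n
  have hmem {j : ℕ} (hj : j ∈ Icc 1 n) := natCast_mem_image_natCast_iff hτ hj
  constructor
  · intro h
    refine ⟨fun j hj hj1 => h _ (mem_image_of_mem _ hj) ?_, fun ⟨hmτ, h1τ⟩ => ?_⟩
    · rw [← Nat.cast_succ]; exact mem_image_of_mem _ hj1
    · refine h _ (mem_image_of_mem _ hmτ) ?_
      rw [ZMod.natCast_self, zero_add, ← Nat.cast_one]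
      exact mem_image_of_mem _ h1τ
  · rintro ⟨h, hwrap⟩ _ hx hx1
    obtain ⟨i, hi, rfl⟩ := mem_image.mp hx
    have hi' := mem_Icc.mp (hτ hi)
    by_cases him : i = n
    · subst him
      rw [ZMod.natCast_self, zero_add, ← Nat.cast_one, hmem (by simp; omega)] at hx1
      exact hwrap ⟨hi, hx1⟩
    · rw [← Nat.cast_succ, hmem (by simp; omega)] at hx1
      exact h i hi hx1

variable {R : Type*} [CommRing R]

lemma prod_vertexWeight_image_natCast {τ : Finset ℕ} (hτ : τ ⊆ Icc 1 n) (z F : ZMod n → R) :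
    ∏ j, vertexWeight z F (τ.image Nat.cast) j
      = (if 1 ∈ τ then -F 1 else if n ∈ τ then 1 else z 1)
        * ∏ j ∈ Icc 2 n, vertexWeight (fun j : ℕ => z j) (fun j : ℕ => F j) τ j := by
  have hn : 0 < n := Nat.pos_of_neZero n
  have hmem {j : ℕ} (hj : j ∈ Icc 1 n) := natCast_mem_image_natCast_iff hτ hj
  rw [← Finset.coe_eq_univ.mp (by rw [coe_image, bijOn_natCast_Icc.image_eq, coe_univ]),
    prod_image fun i hi j hj => bijOn_natCast_Icc.injOn hi hj,
    ← insert_Icc_add_one_left_eq_Icc (show 1 ≤ n by omega), prod_insert (by simp)]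
  congr 1
  · rw [vertexWeight, Nat.cast_one, sub_self, ← ZMod.natCast_self n, ← Nat.cast_one]
    simp only [hmem (show 1 ∈ Icc 1 n by simp; omega), hmem (show n ∈ Icc 1 n by simp; omega)]
  · refine prod_congr rfl fun j hj => ?_
    have hj' := mem_Icc.mp hj
    rw [vertexWeight, vertexWeight, ← Nat.cast_pred (by omega)]
    simp only [hmem (show j ∈ Icc 1 n by simp; omega), hmem (show j - 1 ∈ Icc 1 n by simp; omega)]

lemma matchingWeight_image_natCast {τ : Finset ℕ} (hτ : τ ⊆ Icc 1 n) (z F : ZMod n → R) :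
    matchingWeight z F univ (τ.image Nat.cast)
      = if n ∈ τ ∧ 1 ∈ τ then 0
        else (if 1 ∈ τ then -F 1 else if n ∈ τ then 1 else z 1)
          * matchingWeight (fun j : ℕ => z j) (fun j : ℕ => F j) (Icc 2 n) τ := by
  unfold matchingWeight
  rw [prod_vertexWeight_image_natCast hτ]
  simp only [isMatching_image_natCast_iff hτ]
  by_cases hw : n ∈ τ ∧ 1 ∈ τ <;> by_cases hM : IsMatching τ <;> simp [hw, hM]

section Cases

variable {τ : Finset ℕ} (z F : ZMod n → R)

lemma matchingWeight_image_natCast_of_subset (hτ : τ ⊆ Ico 2 n) :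
    matchingWeight z F univ (τ.image Nat.cast)
      = z 1 * matchingWeight (fun j : ℕ => z j) (fun j : ℕ => F j) (Icc 2 n) τ := by
  have h1 : 1 ∉ τ := fun h => by simpa using hτ h
  have hn : n ∉ τ := fun h => by simpa using hτ h
  simp [matchingWeight_image_natCast (hτ.trans Ico_two_subset_Icc_one), h1, hn]

lemma matchingWeight_image_natCast_insert_top (hn : 2 ≤ n) (hτ : τ ⊆ Ico 2 n) :
    matchingWeight z F univ ((insert n τ).image Nat.cast)
      = -F n * if n - 1 ∈ τ then 0
          else matchingWeight (fun j : ℕ => z j) (fun j : ℕ => F j) (Icc 2 (n - 1)) τ := by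
  have h1 : 1 ∉ insert n τ := fun h => by
    rcases mem_insert.mp h with h | h
    · omega
    · simpa using hτ h
  have hsub : insert n τ ⊆ Icc 1 n :=
    insert_subset (by simp; omega) (hτ.trans Ico_two_subset_Icc_one)
  simp only [matchingWeight_image_natCast hsub, h1, and_false, if_false, mem_insert_self,
    if_true, one_mul]
  obtain ⟨b, rfl⟩ : ∃ b, n = b + 1 := ⟨n - 1, by omega⟩
  rw [matchingWeight_insert_succ (by omega) hτ, Nat.add_sub_cancel]
  split_ifs <;> simp

lemma matchingWeight_image_natCast_insert_one (hn : 2 ≤ n) (hτ : τ ⊆ Ico 2 n) :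
    matchingWeight z F univ ((insert 1 τ).image Nat.cast)
      = -F 1 * if 2 ∈ τ then 0
          else matchingWeight (fun j : ℕ => z j) (fun j : ℕ => F j) (Icc 3 n) τ := by
  have hn' : n ∉ insert 1 τ := fun h => by
    rcases mem_insert.mp h with h | h
    · omega
    · simpa using hτ h
  have hsub : insert 1 τ ⊆ Icc 1 n :=
    insert_subset (by simp; omega) (hτ.trans Ico_two_subset_Icc_one)
  simp only [matchingWeight_image_natCast hsub, hn', false_and, if_false, mem_insert_self,
    if_true]
  rw [matchingWeight_insert_of_lt (a := 1) (by omega) hτ]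

lemma matchingWeight_image_natCast_insert_one_insert_top (hn : 2 ≤ n) (hτ : τ ⊆ Ico 2 n) :
    matchingWeight z F univ ((insert 1 (insert n τ)).image Nat.cast) = 0 := by
  have hsub : insert 1 (insert n τ) ⊆ Icc 1 n := insert_subset (by simp; omega)
    (insert_subset (by simp; omega) (hτ.trans Ico_two_subset_Icc_one))
  rw [matchingWeight_image_natCast hsub, if_pos (by simp)]

end Cases

theorem sum_matchingWeight_zmod (hn : 2 ≤ n) (z F : ZMod n → R) :
    ∑ σ : Finset (ZMod n), matchingWeight z F univ σ
      = z 1 * pathMatchingSum (fun j : ℕ => z j) (fun j : ℕ => F j) 2 n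
        - F n * pathMatchingSum (fun j : ℕ => z j) (fun j : ℕ => F j) 2 (n - 1)
        - F 1 * pathMatchingSum (fun j : ℕ => z j) (fun j : ℕ => F j) 3 n := by
  have hIcc : Icc 1 n = insert 1 (insert n (Ico 2 n)) := by ext; simp; omega
  have hIco_top : (Ico 2 n).erase (n - 1) = Ico 2 (n - 1) := by ext; simp; omega
  have hIco_bot : (Ico 2 n).erase 2 = Ico 3 n := by ext; simp; omega
  rw [← powerset_univ, ← sum_powerset_image_of_bijOn bijOn_natCast_Icc, hIcc,
    sum_powerset_insert (by simp; omega), sum_powerset_insert (by simp),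
    sum_powerset_insert (by simp)]
  rw [sum_congr rfl fun τ hτ => matchingWeight_image_natCast_of_subset z F (mem_powerset.mp hτ),
    sum_congr rfl fun τ hτ => matchingWeight_image_natCast_insert_top z F hn (mem_powerset.mp hτ),
    sum_congr rfl fun τ hτ => matchingWeight_image_natCast_insert_one z F hn (mem_powerset.mp hτ),
    sum_congr rfl fun τ hτ =>
      matchingWeight_image_natCast_insert_one_insert_top z F hn (mem_powerset.mp hτ),
    sum_const_zero, ← mul_sum, ← mul_sum, ← mul_sum, sum_powerset_ite_mem, sum_powerset_ite_mem,
    hIco_top, hIco_bot, pathMatchingSum, pathMatchingSum, pathMatchingSum]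
  ring

end Cycle

theorem sum_neg_one_pow_mul_Tv :
    ∑ p ∈ range (m / 2 + 1), (-1 : Lm K m) ^ p * Tv K m F p
      = ∑ σ : Finset (ZMod m), matchingWeight (zv K m F) (Fc K m F) univ σ := by
  let matchings : Finset (Finset (ZMod m)) := univ.filter IsMatching
  have hTsets (p : ℕ) : Tsets m p = matchings.filter (#· = p) := by
    ext σ
    simp [matchings, Tsets, isMatching_iff_forall_ne, and_comm]
  have hcard (σ) (hσ : σ ∈ matchings) : #σ ∈ range (m / 2 + 1) := by
    have := (mem_filter.mp hσ).2.two_mul_card_le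
    rw [ZMod.card] at this
    exact mem_range.mpr (by omega)
  unfold matchingWeight
  rw [← sum_filter, ← sum_fiberwise_of_maps_to hcard]
  refine sum_congr rfl fun p _ => ?_
  rw [Tv, hTsets, mul_sum]
  refine sum_congr rfl fun σ hσ => ?_
  rw [← (mem_filter.mp hσ).2, ← prod_vertexWeight]

omit [NeZero m] in
theorem Cv_eq_pathMatchingSum : ∀ {k : ℕ}, 1 ≤ k →
    Cv K m F k = pathMatchingSum (fun j : ℕ => zv K m F j) (fun j : ℕ => Fc K m F j) 2 k
  | 0, h => absurd h (by norm_num)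
  | 1, _ => (pathMatchingSum_of_lt _ _ (by norm_num)).symm
  | 2, _ => (pathMatchingSum_self (fun j : ℕ => zv K m F j) _ 2).symm
  | k + 3, _ => by
    rw [Cv, Cv_eq_pathMatchingSum (k := k + 2) (by omega),
      Cv_eq_pathMatchingSum (k := k + 1) (by omega)]
    exact (pathMatchingSum_add_two (by omega)).symm

omit [NeZero m] in
theorem Cpv_eq_pathMatchingSum : ∀ {k : ℕ}, 1 ≤ k →
    Cpv K m F k = pathMatchingSum (fun j : ℕ => zv K m F j) (fun j : ℕ => Fc K m F j) 3 (k + 1)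
  | 0, h => absurd h (by norm_num)
  | 1, _ => (pathMatchingSum_of_lt _ _ (by norm_num)).symm
  | 2, _ => (pathMatchingSum_self (fun j : ℕ => zv K m F j) _ 3).symm
  | k + 3, _ => by
    rw [Cpv, Cpv_eq_pathMatchingSum (k := k + 2) (by omega),
      Cpv_eq_pathMatchingSum (k := k + 1) (by omega)]
    exact (pathMatchingSum_add_two (by omega)).symm

theorem stmt_19 (hm : 2 ≤ m) :
    Av K m F = ∑ p ∈ Finset.range (m / 2 + 1), (-1 : Lm K m) ^ p * Tv K m F p := by
  rw [sum_neg_one_pow_mul_Tv, sum_matchingWeight_zmod hm, Av,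
    Cv_eq_pathMatchingSum K m F (by omega), Cv_eq_pathMatchingSum K m F (by omega),
    Cpv_eq_pathMatchingSum K m F (by omega), Nat.sub_add_cancel (by omega), Nat.cast_one]
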